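/- If F : S → T is a triangulated functor between triangulated categories whose essential image is dense in T (every object of T is a direct summand of an object in the image), then dim T ≤ dim S, where dim denotes Rouquier dimension. -/
import Mathlib


open CategoryTheory Limits Pretriangulated

section RouquierDimension

variable (T : Type*) [Category T] [HasZeroObject T] [Preadditive T] [HasShift T ℤ]
  [∀ n : ℤ, (shiftFunctor T n).Additive] [Pretriangulated T] [HasFiniteBiproducts T]

/-- `⟨C⟩`: the closure of a class of objects under shifts, finite direct sums and direct
summands. -/
def triSpan (C : Set T) : Set T :=
  {X | ∃ (m : ℕ) (f : Fin m → T) (sh : Fin m → ℤ), (∀ i, f i ∈ C) ∧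
    ∃ Z : T, Nonempty ((X ⊞ Z) ≅ ⨁ (fun i => (f i)⟦sh i⟧))}

/-- `C ∗ D`: objects `X` fitting in a distinguished triangle `C → X → D → C[1]`. -/
def triStar (C D : Set T) : Set T :=
  {X | ∃ U ∈ C, ∃ W ∈ D, ∃ (u : U ⟶ X) (v : X ⟶ W) (w : W ⟶ U⟦(1 : ℤ)⟧),
    Triangle.mk u v w ∈ distTriang T}

/-- `⟨C⟩_n`, defined by `⟨C⟩₀ = 0`, `⟨C⟩₁ = ⟨C⟩` and
`⟨C⟩_n = ⟨C⟩_{n−1} ◇ ⟨C⟩ = ⟨⟨C⟩_{n−1} ∗ ⟨C⟩⟩`. -/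
def triLevel (C : Set T) : ℕ → Set T
  | 0 => {X | IsZero X}
  | n + 1 => triSpan T (triStar T (triLevel C n) (triSpan T C))

/-- The Rouquier dimension of `T` is at most `d`: `T = ⟨M⟩_{d+1}` for some object `M`. -/
def triDimLE (d : ℕ) : Prop := ∃ M : T, ∀ X : T, X ∈ triLevel T {M} (d + 1)

/-- The Rouquier dimension of the triangulated category `T`. -/
noncomputable def triDim : ℕ∞ := sInf {e : ℕ∞ | ∃ d : ℕ, e = d ∧ triDimLE T d}

end RouquierDimension


section AuxLemmas

variable {T : Type*} [Category T] [HasZeroObject T] [Preadditive T] [HasShift T ℤ]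
  [∀ n : ℤ, (shiftFunctor T n).Additive] [Pretriangulated T] [HasFiniteBiproducts T]

theorem triSpan_mono' {C D : Set T} (h : C ⊆ D) : triSpan T C ⊆ triSpan T D := by
  rintro X ⟨m, f, sh, hf, Z, ⟨e⟩⟩
  exact ⟨m, f, sh, fun i => h (hf i), Z, ⟨e⟩⟩

theorem triStar_mono' {C C' D D' : Set T} (hC : C ⊆ C') (hD : D ⊆ D') :
    triStar T C D ⊆ triStar T C' D' := by
  rintro X ⟨U, hU, W, hW, u, v, w, hT⟩
  exact ⟨U, hC hU, W, hD hW, u, v, w, hT⟩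

theorem triSpan_summand' {C : Set T} {X Z W : T} (hW : W ∈ triSpan T C)
    (e : (X ⊞ Z) ≅ W) : X ∈ triSpan T C := by
  obtain ⟨m, f, sh, hf, Z', ⟨e'⟩⟩ := hW
  refine ⟨m, f, sh, hf, Z ⊞ Z', ⟨?_⟩⟩
  calc X ⊞ (Z ⊞ Z') ≅ (X ⊞ Z) ⊞ Z' := (biprod.associator X Z Z').symm
    _ ≅ W ⊞ Z' := biprod.mapIso e (Iso.refl Z')
    _ ≅ _ := e'

variable {S : Type*} [Category S] [HasZeroObject S] [Preadditive S] [HasShift S ℤ]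
  [∀ n : ℤ, (shiftFunctor S n).Additive] [Pretriangulated S] [HasFiniteBiproducts S]
  (F : S ⥤ T) [F.CommShift ℤ] [F.IsTriangulated]

theorem map_triSpan' {C : Set S} {Y : S} (hY : Y ∈ triSpan S C) :
    F.obj Y ∈ triSpan T (F.obj '' C) := by
  obtain ⟨m, f, sh, hf, Z, ⟨e⟩⟩ := hY
  haveI : PreservesBinaryBiproducts F := preservesBinaryBiproducts_of_preservesBiproducts F
  refine ⟨m, fun i => F.obj (f i), sh, fun i => ⟨f i, hf i, rfl⟩, F.obj Z, ⟨?_⟩⟩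
  calc F.obj Y ⊞ F.obj Z ≅ F.obj (Y ⊞ Z) := (F.mapBiprod Y Z).symm
    _ ≅ F.obj (⨁ fun i => (f i)⟦sh i⟧) := F.mapIso e
    _ ≅ ⨁ fun i => F.obj ((f i)⟦sh i⟧) := F.mapBiproduct _
    _ ≅ ⨁ fun i => (F.obj (f i))⟦sh i⟧ :=
        biproduct.mapIso (fun i => (F.commShiftIso (sh i)).app (f i))

theorem map_triStar' {C D : Set S} {X : S} (hX : X ∈ triStar S C D) :
    F.obj X ∈ triStar T (F.obj '' C) (F.obj '' D) := by
  obtain ⟨U, hU, W, hW, u, v, w, hT⟩ := hX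
  exact ⟨F.obj U, ⟨U, hU, rfl⟩, F.obj W, ⟨W, hW, rfl⟩, F.map u, F.map v,
    F.map w ≫ (F.commShiftIso (1 : ℤ)).hom.app U, F.map_distinguished _ hT⟩

theorem map_triLevel' (C : Set S) :
    ∀ n, ∀ Y ∈ triLevel S C n, F.obj Y ∈ triLevel T (F.obj '' C) n := by
  intro n
  induction n with
  | zero => exact fun Y hY => F.map_isZero hY
  | succ n ih =>
    intro Y hY
    refine triSpan_mono' ?_ (map_triSpan' F hY)
    rintro _ ⟨X, hX, rfl⟩
    refine triStar_mono' ?_ ?_ (map_triStar' F hX)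
    · rintro _ ⟨A, hA, rfl⟩; exact ih A hA
    · rintro _ ⟨A, hA, rfl⟩; exact map_triSpan' F hA

end AuxLemmas

/-- If `F : S ⥤ T` is a triangulated functor whose essential image is dense in `T`
(every object of `T` is a direct summand of an object in the image of `F`), then
`dim T ≤ dim S`. -/
theorem triDim_le_of_dense
    (S : Type*) [Category S] [HasZeroObject S] [Preadditive S] [HasShift S ℤ]
    [∀ n : ℤ, (shiftFunctor S n).Additive] [Pretriangulated S] [HasFiniteBiproducts S]
    (T : Type*) [Category T] [HasZeroObject T] [Preadditive T] [HasShift T ℤ]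
    [∀ n : ℤ, (shiftFunctor T n).Additive] [Pretriangulated T] [HasFiniteBiproducts T]
    (F : S ⥤ T) [F.CommShift ℤ] [F.IsTriangulated]
    (hdense : ∀ X : T, ∃ (Y : S) (Z : T), Nonempty ((X ⊞ Z) ≅ F.obj Y)) :
    triDim T ≤ triDim S := by
  apply sInf_le_sInf
  rintro e ⟨d, rfl, M, hM⟩
  refine ⟨d, rfl, F.obj M, fun X => ?_⟩
  obtain ⟨Y, Z, ⟨e⟩⟩ := hdense X
  have hY : F.obj Y ∈ triLevel T (F.obj '' {M}) (d + 1) := map_triLevel' F {M} (d + 1) Y (hM Y)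
  rw [Set.image_singleton] at hY
  exact triSpan_summand' hY e
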